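/- arXiv:2408.06833 — 3 statements merged into one kernel-verified Lean document; each statement's English description precedes it below -/
import Mathlib

section
/- Let n ≥ 1 be a natural number and C > 0, D₀ ≥ 0, L real numbers. Let (λ_k)_{k∈ℕ} be a sequence of nonnegative real numbers such that for every real t the set {k : λ_k ≤ t} is finite, and let N(t) := #{k : λ_k ≤ t} be its counting function. Assume that |N(t) − C·t^n| ≤ D₀·t^{n−1} for all t ≥ 1. Let (a_k)_{k∈ℕ} be a sequence of real numbers such that (1/N(t))·∑_{k : λ_k ≤ t} a_k → L as t → ∞. Then for every ε > 0 there exist D ≥ 0 and t₁ ≥ 1 such that for all t ≥ t₁ one has ∑_{k : t/2 < λ_k ≤ t} a_k ≥ C·t^n·((1 − 2^{−n})·L − (1 + 2^{−n})·ε) − D·t^{n−1}. -/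
open Filter

set_option maxHeartbeats 1000000

/-- Abstract dyadic lower-bound lemma: if the counting function `N(t)` of the
sequence `λ_k` satisfies `|N(t) - C t^n| ≤ D₀ t^{n-1}` for `t ≥ 1` and the Cesàro
means `(1/N(t)) ∑_{λ_k ≤ t} a_k` tend to `L`, then for every `ε > 0` there are
`D ≥ 0` and `t₁ ≥ 1` such that for all `t ≥ t₁`,
`∑_{t/2 < λ_k ≤ t} a_k ≥ C t^n ((1 - 2^{-n}) L - (1 + 2^{-n}) ε) - D t^{n-1}`. -/
theorem dyadic_lower_bound
    (n : ℕ) (hn : 1 ≤ n) (C D₀ L : ℝ) (hC : 0 < C) (hD₀ : 0 ≤ D₀)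
    (lam a : ℕ → ℝ) (hlam : ∀ k, 0 ≤ lam k)
    (hfin : ∀ t : ℝ, {k : ℕ | lam k ≤ t}.Finite)
    (hN : ∀ t : ℝ, 1 ≤ t →
      |(((hfin t).toFinset.card : ℝ)) - C * t ^ n| ≤ D₀ * t ^ (n - 1))
    (hL : Tendsto
      (fun t : ℝ => (1 / (((hfin t).toFinset.card : ℝ))) * ∑ k ∈ (hfin t).toFinset, a k)
      atTop (nhds L)) :
    ∀ ε > (0 : ℝ), ∃ D ≥ (0 : ℝ), ∃ t₁ ≥ (1 : ℝ), ∀ t ≥ t₁,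
      ∑ k ∈ (hfin t).toFinset.filter (fun k => t / 2 < lam k), a k ≥
        C * t ^ n * ((1 - (2 : ℝ) ^ (-(n : ℤ))) * L - (1 + (2 : ℝ) ^ (-(n : ℤ))) * ε)
          - D * t ^ (n - 1) := by
  intro ε hε
  obtain ⟨t₀, ht₀⟩ := Metric.tendsto_atTop.mp hL ε hε
  set T : ℝ := max t₀ (max 1 ((D₀ + 1) / C)) with hTdef
  have hT1 : (1 : ℝ) ≤ T := le_trans (le_max_left 1 _) (le_max_right _ _)
  have hTt₀ : t₀ ≤ T := le_max_left _ _
  have hTD : (D₀ + 1) / C ≤ T := le_trans (le_max_right 1 _) (le_max_right _ _)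
  have key : ∀ s, T ≤ s →
      0 < ((hfin s).toFinset.card : ℝ) ∧
      |((hfin s).toFinset.card : ℝ) - C * s ^ n| ≤ D₀ * s ^ (n - 1) ∧
      |(∑ k ∈ (hfin s).toFinset, a k) - L * ((hfin s).toFinset.card : ℝ)|
        ≤ ε * ((hfin s).toFinset.card : ℝ) := by
    intro s hs
    have hs1 : (1 : ℝ) ≤ s := hT1.trans hs
    have hNs := hN s hs1
    have hspow : (0 : ℝ) < s ^ (n - 1) := pow_pos (by linarith) _
    have hsn : s ^ n = s * s ^ (n - 1) := by
      conv_lhs => rw [show n = 1 + (n - 1) by omega]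
      rw [pow_add, pow_one]
    have hCs : D₀ + 1 ≤ C * s := by
      calc D₀ + 1 = ((D₀ + 1) / C) * C := by field_simp
        _ ≤ s * C := mul_le_mul_of_nonneg_right (hTD.trans hs) hC.le
        _ = C * s := mul_comm _ _
    have hNpos : 0 < ((hfin s).toFinset.card : ℝ) := by
      have h1 := (abs_le.mp hNs).1
      have h2 : s ^ (n - 1) ≤ C * s ^ n - D₀ * s ^ (n - 1) := by
        rw [hsn]; nlinarith [hspow]
      linarith
    refine ⟨hNpos, hNs, ?_⟩
    have hd := ht₀ s (hTt₀.trans hs)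
    rw [Real.dist_eq] at hd
    have hne : ((hfin s).toFinset.card : ℝ) ≠ 0 := ne_of_gt hNpos
    have heq : (∑ k ∈ (hfin s).toFinset, a k) - L * ((hfin s).toFinset.card : ℝ)
        = ((hfin s).toFinset.card : ℝ) *
          ((1 / ((hfin s).toFinset.card : ℝ)) * (∑ k ∈ (hfin s).toFinset, a k) - L) := by
      field_simp
    rw [heq, abs_mul, abs_of_pos hNpos]
    exact le_of_lt (by nlinarith [hNpos])
  refine ⟨2 * (|L| + ε) * D₀, by positivity, 2 * T, by linarith, ?_⟩
  intro t ht
  have hT2 : T ≤ t / 2 := by linarith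
  have hTt : T ≤ t := by linarith
  obtain ⟨hNtpos, hNt, hSt⟩ := key t hTt
  obtain ⟨hNhpos, hNh, hSh⟩ := key (t / 2) hT2
  have ht1 : (1 : ℝ) ≤ t := hT1.trans hTt
  have hsub : (hfin (t / 2)).toFinset ⊆ (hfin t).toFinset := by
    intro k hk
    simp only [Set.Finite.mem_toFinset, Set.mem_setOf_eq] at *
    linarith
  have hsplit : ∑ k ∈ (hfin t).toFinset.filter (fun k => t / 2 < lam k), a k
      = (∑ k ∈ (hfin t).toFinset, a k) - (∑ k ∈ (hfin (t / 2)).toFinset, a k) := by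
    rw [← Finset.sum_sdiff_eq_sub hsub]
    congr 1
    ext k
    simp only [Finset.mem_sdiff, Finset.mem_filter, Set.Finite.mem_toFinset,
      Set.mem_setOf_eq, not_le]
  rw [hsplit]
  set Nt := ((hfin t).toFinset.card : ℝ)
  set Nh := ((hfin (t / 2)).toFinset.card : ℝ)
  set St := ∑ k ∈ (hfin t).toFinset, a k
  set Sh := ∑ k ∈ (hfin (t / 2)).toFinset, a k
  have hpow : ((2 : ℝ)) ^ (-(n : ℤ)) = ((2 : ℝ) ^ n)⁻¹ := by
    rw [zpow_neg, zpow_natCast]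
  have hhalfn : (t / 2) ^ n = (2 : ℝ) ^ (-(n : ℤ)) * t ^ n := by
    rw [hpow, div_pow]; ring
  have hhalfn1 : (t / 2) ^ (n - 1) ≤ t ^ (n - 1) :=
    pow_le_pow_left₀ (by linarith) (by linarith) _
  have hu := abs_le.mp hNt
  have hv := abs_le.mp hNh
  have hSt' := abs_le.mp hSt
  have hSh' := abs_le.mp hSh
  have hLu : L * (Nt - C * t ^ n) ≥ -(|L| * (D₀ * t ^ (n - 1))) := by
    have h1 : |L * (Nt - C * t ^ n)| ≤ |L| * (D₀ * t ^ (n - 1)) := by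
      rw [abs_mul]
      exact mul_le_mul_of_nonneg_left hNt (abs_nonneg L)
    linarith [(abs_le.mp h1).1]
  have hLv : L * (Nh - C * (t / 2) ^ n) ≤ |L| * (D₀ * t ^ (n - 1)) := by
    have h1 : |L * (Nh - C * (t / 2) ^ n)| ≤ |L| * (D₀ * t ^ (n - 1)) := by
      rw [abs_mul]
      refine mul_le_mul_of_nonneg_left (hNh.trans ?_) (abs_nonneg L)
      exact mul_le_mul_of_nonneg_left hhalfn1 hD₀
    linarith [(abs_le.mp h1).2]
  have hεNt : ε * Nt ≤ ε * (C * t ^ n + D₀ * t ^ (n - 1)) :=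
    mul_le_mul_of_nonneg_left (by linarith [hu.2]) hε.le
  have hεNh : ε * Nh ≤ ε * (C * (t / 2) ^ n + D₀ * t ^ (n - 1)) :=
    mul_le_mul_of_nonneg_left
      (by nlinarith [hv.2, mul_le_mul_of_nonneg_left hhalfn1 hD₀]) hε.le
  rw [hhalfn] at hLv hεNh
  linarith [hSt'.1, hSh'.2, hLu, hLv, hεNt, hεNh]
end

section
/- Let n ≥ 1 be a natural number and C > 0, D₀ ≥ 0, L > 0 real numbers. Let (λ_k)_{k∈ℕ} be a sequence of real numbers with λ_k ≥ 1 for all k, such that for every real t the set {k : λ_k ≤ t} is finite, with counting function N(t) := #{k : λ_k ≤ t} satisfying |N(t) − C·t^n| ≤ D₀·t^{n−1} for all t ≥ 1. Let (a_k)_{k∈ℕ} be a sequence of real numbers such that (1/N(t))·∑_{k : λ_k ≤ t} a_k → L as t → ∞. Then for every real μ with μ ≥ −n, the series ∑_k λ_k^μ·|a_k| diverges; equivalently, if ∑_k λ_k^μ·|a_k| < ∞ then μ < −n. -/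
open Filter

/-- Abstract divergence statement behind the necessity part of the trace-class
characterisation: if the counting function of `λ_k` has Weyl asymptotics
`|N(t) - C t^n| ≤ D₀ t^{n-1}` and the Cesàro means of `a_k` converge to `L > 0`,
then for every `μ ≥ -n` the series `∑ λ_k^μ |a_k|` diverges; equivalently, its
summability forces `μ < -n`. -/
theorem divergence_of_order_ge_neg_n
    (n : ℕ) (hn : 1 ≤ n) (C D₀ L : ℝ) (hC : 0 < C) (hD₀ : 0 ≤ D₀) (hLpos : 0 < L)
    (lam a : ℕ → ℝ) (hlam : ∀ k, 1 ≤ lam k)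
    (hfin : ∀ t : ℝ, {k : ℕ | lam k ≤ t}.Finite)
    (hN : ∀ t : ℝ, 1 ≤ t →
      |(((hfin t).toFinset.card : ℝ)) - C * t ^ n| ≤ D₀ * t ^ (n - 1))
    (hL : Tendsto
      (fun t : ℝ => (1 / (((hfin t).toFinset.card : ℝ))) * ∑ k ∈ (hfin t).toFinset, a k)
      atTop (nhds L)) :
    ∀ μ : ℝ, -(n : ℝ) ≤ μ → ¬ Summable (fun k : ℕ => lam k ^ μ * |a k|) := by
  intro μ hμ hsum
  set F : ℝ → Finset ℕ := fun t => (hfin t).toFinset with hF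
  have hmemF : ∀ t k, k ∈ F t ↔ lam k ≤ t := fun t k => (hfin t).mem_toFinset
  set S : ℝ → ℝ := fun t => ∑ k ∈ F t, a k with hS
  set Nc : ℝ → ℝ := fun t => ((F t).card : ℝ) with hNc
  -- Step A : N(t)/t^n → C
  have hA : Tendsto (fun t => Nc t / t ^ n) atTop (nhds C) := by
    have h0 : Tendsto (fun t : ℝ => Nc t / t ^ n - C) atTop (nhds 0) := by
      have hg : Tendsto (fun t : ℝ => D₀ / t) atTop (nhds 0) :=
        tendsto_const_nhds.div_atTop tendsto_id
      apply squeeze_zero_norm' _ hg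
      · filter_upwards [eventually_ge_atTop (1:ℝ)] with t ht
        have htpos : (0:ℝ) < t := lt_of_lt_of_le one_pos ht
        have htn : (0:ℝ) < t ^ n := pow_pos htpos n
        have heq : Nc t / t ^ n - C = (Nc t - C * t ^ n) / t ^ n := by field_simp
        rw [Real.norm_eq_abs, heq, abs_div, abs_of_pos htn, div_le_div_iff₀ htn htpos]
        calc |Nc t - C * t ^ n| * t ≤ (D₀ * t ^ (n-1)) * t := by
              exact mul_le_mul_of_nonneg_right (hN t ht) (le_of_lt htpos)
          _ = D₀ * t ^ n := by
              rw [mul_assoc, ← pow_succ, Nat.sub_add_cancel hn]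
    have := h0.add_const C
    simpa using this
  -- N(t) is positive eventually
  have hNpos : ∀ t, lam 0 ≤ t → (0:ℝ) < Nc t := by
    intro t ht
    have : 0 ∈ F t := (hmemF t 0).2 ht
    have h2 : 0 < (F t).card := Finset.card_pos.2 ⟨0, this⟩
    have : (0:ℝ) < ((F t).card : ℝ) := by exact_mod_cast h2
    exact this
  -- Step B : S(t)/t^n → L*C
  have hB : Tendsto (fun t => S t / t ^ n) atTop (nhds (L * C)) := by
    apply (hL.mul hA).congr'
    filter_upwards [eventually_ge_atTop (lam 0)] with t ht
    have hne : Nc t ≠ 0 := ne_of_gt (hNpos t ht)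
    show (1 / Nc t * S t) * (Nc t / t ^ n) = S t / t ^ n
    field_simp
  -- Step B2 : S(2t)/t^n → L*C*2^n
  have hcomp : Tendsto (fun t : ℝ => 2 * t) atTop atTop := by
    have : Tendsto (fun t : ℝ => t) atTop atTop := tendsto_id
    exact this.const_mul_atTop (by norm_num)
  have hB2 : Tendsto (fun t => S (2*t) / t ^ n) atTop (nhds (L * C * 2 ^ n)) := by
    have h1 := (hB.comp hcomp).mul_const ((2:ℝ)^n)
    apply h1.congr'
    filter_upwards [eventually_gt_atTop (0:ℝ)] with t ht
    have htn : (0:ℝ) < t ^ n := pow_pos ht n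
    show S (2*t) / (2*t) ^ n * 2 ^ n = S (2*t) / t ^ n
    rw [mul_pow]
    field_simp
  have hD : Tendsto (fun t => S (2*t)/t^n - S t / t^n) atTop
      (nhds (L * C * 2 ^ n - L * C)) := hB2.sub hB
  -- ε and its positivity
  set ε : ℝ := L * C * (2 ^ n - 1) / 2 with hε
  have h2n : (1:ℝ) < 2 ^ n := by
    have : (2:ℝ) ^ 1 ≤ 2 ^ n := pow_le_pow_right₀ (by norm_num) hn
    linarith [this]
  have hεpos : 0 < ε := by
    have := mul_pos hLpos hC
    have h21 : (0:ℝ) < 2 ^ n - 1 := by linarith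
    positivity
  have hεlt : ε < L * C * 2 ^ n - L * C := by
    have hLC : 0 < L * C := mul_pos hLpos hC
    have : L * C * 2 ^ n - L * C = L * C * (2 ^ n - 1) := by ring
    rw [this, hε]
    have h21 : (0:ℝ) < 2 ^ n - 1 := by linarith
    nlinarith
  have hev : ∀ᶠ t : ℝ in atTop, ε < S (2*t)/t^n - S t / t^n :=
    hD.eventually (eventually_gt_nhds hεlt)
  -- contradiction via vanishing of tails
  set c : ℝ := ε / 2 ^ n with hc
  have hcpos : 0 < c := by positivity
  obtain ⟨s, hs⟩ := summable_iff_vanishing.mp hsum (Set.Iio c) (Iio_mem_nhds hcpos)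
  obtain ⟨M, hM⟩ := (s.image lam).exists_le
  obtain ⟨t, ht1, htM, htsh⟩ :
      ∃ t : ℝ, 1 ≤ t ∧ M ≤ t ∧ ε < S (2*t)/t^n - S t / t^n := by
    have := ((eventually_ge_atTop (1:ℝ)).and ((eventually_ge_atTop M).and hev)).exists
    obtain ⟨t, h1, h2, h3⟩ := this
    exact ⟨t, h1, h2, h3⟩
  have htpos : (0:ℝ) < t := lt_of_lt_of_le one_pos ht1
  have htn : (0:ℝ) < t ^ n := pow_pos htpos n
  have h2t : (0:ℝ) < 2 * t := by linarith
  have h2tn : (0:ℝ) < (2*t) ^ n := pow_pos h2t n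
  -- the shell
  set sh : Finset ℕ := F (2*t) \ F t with hsh
  have hsub : F t ⊆ F (2*t) := by
    intro k hk
    rw [hmemF] at hk ⊢
    linarith
  have hdiff : ∑ k ∈ sh, a k = S (2*t) - S t := Finset.sum_sdiff_eq_sub hsub
  have hdisj : Disjoint sh s := by
    rw [Finset.disjoint_left]
    intro k hk hks
    have h1 : k ∉ F t := (Finset.mem_sdiff.1 hk).2
    rw [hmemF] at h1
    have h2 : lam k ≤ M := hM (lam k) (Finset.mem_image_of_mem lam hks)
    exact h1 (le_trans h2 htM)
  have hlt := hs sh hdisj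
  rw [Set.mem_Iio] at hlt
  -- lower bound for each shell term
  have hbound : ∀ k ∈ sh, |a k| ≤ (2*t) ^ n * (lam k ^ μ * |a k|) := by
    intro k hk
    have hk2 : lam k ≤ 2*t := (hmemF _ k).1 (Finset.mem_sdiff.1 hk).1
    have hlpos : (0:ℝ) < lam k := lt_of_lt_of_le one_pos (hlam k)
    have h1 : lam k ^ (-(n:ℝ)) ≤ lam k ^ μ :=
      Real.rpow_le_rpow_of_exponent_le (hlam k) hμ
    have h2 : lam k ^ (-(n:ℝ)) = ((lam k) ^ n)⁻¹ := by
      rw [Real.rpow_neg (le_of_lt hlpos), Real.rpow_natCast]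
    have h3 : (lam k) ^ n ≤ (2*t) ^ n := pow_le_pow_left₀ (le_of_lt hlpos) hk2 n
    have h4 : ((2*t) ^ n)⁻¹ ≤ ((lam k) ^ n)⁻¹ :=
      inv_anti₀ (pow_pos hlpos n) h3
    have h5 : ((2*t) ^ n)⁻¹ * |a k| ≤ lam k ^ μ * |a k| := by
      apply mul_le_mul_of_nonneg_right _ (abs_nonneg _)
      calc ((2*t) ^ n)⁻¹ ≤ ((lam k) ^ n)⁻¹ := h4
        _ = lam k ^ (-(n:ℝ)) := h2.symm
        _ ≤ lam k ^ μ := h1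
    calc |a k| = (2*t) ^ n * (((2*t) ^ n)⁻¹ * |a k|) := by
          field_simp
      _ ≤ (2*t) ^ n * (lam k ^ μ * |a k|) :=
          mul_le_mul_of_nonneg_left h5 (le_of_lt h2tn)
  -- combine
  have hchain : ε * t ^ n ≤ (2*t) ^ n * ∑ k ∈ sh, lam k ^ μ * |a k| := by
    have h1 : ε * t ^ n ≤ S (2*t) - S t := by
      have := htsh
      have h2 : ε < (S (2*t) - S t) / t ^ n := by
        rw [sub_div]; exact this
      rw [lt_div_iff₀ htn] at h2
      linarith
    calc ε * t ^ n ≤ S (2*t) - S t := h1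
      _ = ∑ k ∈ sh, a k := hdiff.symm
      _ ≤ ∑ k ∈ sh, |a k| := Finset.sum_le_sum (fun k _ => le_abs_self _)
      _ ≤ ∑ k ∈ sh, (2*t) ^ n * (lam k ^ μ * |a k|) := Finset.sum_le_sum hbound
      _ = (2*t) ^ n * ∑ k ∈ sh, lam k ^ μ * |a k| := by
          rw [Finset.mul_sum]
  have hfinal : ε * t ^ n < ε * t ^ n := by
    calc ε * t ^ n ≤ (2*t) ^ n * ∑ k ∈ sh, lam k ^ μ * |a k| := hchain
      _ < (2*t) ^ n * c := by
          exact mul_lt_mul_of_pos_left hlt h2tn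
      _ = ε * t ^ n := by
          rw [hc, mul_pow]
          field_simp
  exact lt_irrefl _ hfinal
end

section
/- Let (X, μ) be a σ-finite measure space, let 0 < r ≤ 1, let n > 0 be a real number, let 1 ≤ p₁ < ∞ with conjugate exponent p₁′ (so 1/p₁ + 1/p₁′ = 1), and let 1 ≤ p₂ ≤ ∞. Let (λ_m)_{m∈ℕ} be real numbers with λ_m ≥ 1 for all m and ∑_m λ_m^{−κ} < ∞ for every κ > n. Let a ≥ 0, b ≥ 0, C₀ ≥ 0, and let (e_m)_{m∈ℕ} be complex-valued measurable functions on X with e_m ∈ L^{p₂}(μ) ∩ L^{p₁′}(μ), ‖e_m‖_{L^{p₂}} ≤ C₀·λ_m^{a} and ‖e_m‖_{L^{p₁′}} ≤ C₀·λ_m^{b} for all m. Then for every real s with s > n/r + a + b: (i) ∑_m λ_m^{−sr}·‖e_m‖_{L^{p₂}}^r·‖e_m‖_{L^{p₁′}}^r < ∞; and (ii) for every f ∈ L^{p₁}(μ) the series ∑_m λ_m^{−s}·(∫_X conj(e_m)·f dμ)·e_m converges absolutely in L^{p₂}(μ), and the resulting linear operator E : L^{p₁}(μ) → L^{p₂}(μ)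 is r-nuclear. -/
/-!
By Hölder, `f ↦ ∫ conj(e_m) f dμ` is a functional on `L^{p₁}` of norm at most `‖e_m‖_{p₁'}`, so the
rank-one pieces `λ_m^{-s} ⟨·, e_m⟩ e_m` have norms at most `C₀² λ_m^{-(s-a-b)}`, whose `r`-th powers
are summable because `(s - a - b) r > n`. As `r ≤ 1`, `ℓ^r ⊆ ℓ^1`: the series of operators converges
absolutely in operator norm, and its sum is `r`-nuclear with exactly these pieces.
-/

open MeasureTheory ENNReal

/-- A bounded linear operator `T : E₁ → E₂` between complex Banach spaces is
`r`-nuclear (in the sense of Grothendieck) if there are continuous linear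
functionals `φ_m` on `E₁` and vectors `g_m ∈ E₂` with `T f = ∑ m, φ_m(f) • g_m`
for every `f` and `∑ m, ‖φ_m‖^r ‖g_m‖^r < ∞`. -/
def IsRNuclear {E₁ E₂ : Type*} [NormedAddCommGroup E₁] [NormedSpace ℂ E₁]
    [NormedAddCommGroup E₂] [NormedSpace ℂ E₂] (r : ℝ) (T : E₁ →L[ℂ] E₂) : Prop :=
  ∃ (φ : ℕ → (E₁ →L[ℂ] ℂ)) (g : ℕ → E₂),
    (∀ f : E₁, HasSum (fun m => φ m f • g m) (T f)) ∧
      Summable (fun m => ‖φ m‖ ^ r * ‖g m‖ ^ r)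

theorem summable_of_summable_rpow_of_le_one {x : ℕ → ℝ} {r : ℝ} (hr0 : 0 < r) (hr1 : r ≤ 1)
    (hx0 : ∀ m, 0 ≤ x m) (hx : Summable fun m => x m ^ r) : Summable x := by
  have hr : 0 < (ENNReal.ofReal r).toReal := by rwa [ENNReal.toReal_ofReal hr0.le]
  have hℓr : Memℓp x (ENNReal.ofReal r) := by
    rw [memℓp_gen_iff hr, ENNReal.toReal_ofReal hr0.le]
    simpa [Real.norm_eq_abs, abs_of_nonneg (hx0 _)] using hx
  simpa [Real.norm_eq_abs, abs_of_nonneg (hx0 _)] using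
    (memℓp_gen_iff (by simp)).1 (hℓr.of_exponent_ge (ENNReal.ofReal_le_one.2 hr1))

theorem summable_rpow_mul_of_le_mul_rpow {lam A B : ℕ → ℝ} {s a b C r : ℝ}
    (hlam : ∀ m, 0 < lam m) (hr : 0 ≤ r) (hA0 : ∀ m, 0 ≤ A m) (hB0 : ∀ m, 0 ≤ B m)
    (hA : ∀ m, A m ≤ C * lam m ^ a) (hB : ∀ m, B m ≤ C * lam m ^ b)
    (hsum : Summable fun m => lam m ^ (-((s - a - b) * r))) :
    Summable fun m => (lam m ^ (-s) * A m * B m) ^ r := by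
  refine (hsum.mul_left ((C * C) ^ r)).of_nonneg_of_le (fun m => ?_) fun m => ?_
  · have := hlam m; have := hA0 m; have := hB0 m
    positivity
  have hl := hlam m
  have hexp : lam m ^ (-s) * (C * lam m ^ a) * (C * lam m ^ b) = C * C * lam m ^ (-(s - a - b)) := by
    rw [show -(s - a - b) = -s + a + b by ring, Real.rpow_add hl, Real.rpow_add hl]; ring
  calc (lam m ^ (-s) * A m * B m) ^ r
      ≤ (lam m ^ (-s) * (C * lam m ^ a) * (C * lam m ^ b)) ^ r := by
        have := hA0 m; have := hB0 m; have := (hA0 m).trans (hA m)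
        gcongr
        exacts [hA m, hB m]
    _ = (C * C) ^ r * lam m ^ (-((s - a - b) * r)) := by
        rw [hexp, Real.mul_rpow (mul_self_nonneg C) (Real.rpow_nonneg hl.le _),
          ← Real.rpow_mul hl.le, neg_mul]

section Nuclear

variable {E₁ E₂ : Type*} [NormedAddCommGroup E₁] [NormedSpace ℂ E₁]
  [NormedAddCommGroup E₂] [NormedSpace ℂ E₂] {φ : ℕ → E₁ →L[ℂ] ℂ} {g : ℕ → E₂} {r : ℝ}

theorem summable_norm_smulRight_of_summable_rpow (hr0 : 0 < r) (hr1 : r ≤ 1)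
    (h : Summable fun m => ‖φ m‖ ^ r * ‖g m‖ ^ r) :
    Summable fun m => ‖(φ m).smulRight (g m)‖ := by
  simp_rw [ContinuousLinearMap.norm_smulRight_apply]
  refine summable_of_summable_rpow_of_le_one hr0 hr1 (fun m => by positivity) ?_
  simpa only [Real.mul_rpow (norm_nonneg _) (norm_nonneg _)] using h

theorem summable_norm_smulRight_apply (h : Summable fun m => ‖(φ m).smulRight (g m)‖) (f : E₁) :
    Summable fun m => ‖φ m f • g m‖ :=
  (h.mul_right ‖f‖).of_nonneg_of_le (fun _ => norm_nonneg _) fun m =>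
    ((φ m).smulRight (g m)).le_opNorm f

theorem hasSum_smulRight_apply [CompleteSpace E₂]
    (h : Summable fun m => ‖(φ m).smulRight (g m)‖) (f : E₁) :
    HasSum (fun m => φ m f • g m) ((∑' m, (φ m).smulRight (g m)) f) :=
  (h.of_norm.hasSum).mapL (ContinuousLinearMap.apply ℂ E₂ f)

theorem isRNuclear_tsum_smulRight [CompleteSpace E₂] (hr0 : 0 < r) (hr1 : r ≤ 1)
    (h : Summable fun m => ‖φ m‖ ^ r * ‖g m‖ ^ r) :
    IsRNuclear r (∑' m, (φ m).smulRight (g m)) :=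
  ⟨φ, g, hasSum_smulRight_apply (summable_norm_smulRight_of_summable_rpow hr0 hr1 h), h⟩

end Nuclear

theorem ContinuousLinearMap.norm_lpPairing_le {α 𝕜 E F G : Type*} {m : MeasurableSpace α}
    {μ : Measure α} {p q : ℝ≥0∞} [NontriviallyNormedField 𝕜]
    [NormedAddCommGroup E] [NormedAddCommGroup F] [NormedAddCommGroup G]
    [NormedSpace 𝕜 E] [NormedSpace 𝕜 F] [NormedSpace 𝕜 G] [Fact (1 ≤ p)] [Fact (1 ≤ q)]
    [HolderConjugate p q] [NormedSpace ℝ G] [SMulCommClass ℝ 𝕜 G] [CompleteSpace G]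
    (B : E →L[𝕜] F →L[𝕜] G) : ‖B.lpPairing μ p q‖ ≤ ‖B‖ := by
  have hI : ‖(L1.integralCLM' 𝕜 : Lp G 1 μ →L[𝕜] G)‖ ≤ 1 :=
    opNorm_le_bound _ zero_le_one fun f => by
      rw [← L1.integral_eq', one_mul]; exact L1.norm_integral_le f
  calc ‖B.lpPairing μ p q‖
      ≤ ‖(L1.integralCLM' 𝕜 : Lp G 1 μ →L[𝕜] G).postcomp (Lp F q μ)‖ * ‖B.holderL μ p q 1‖ :=
        opNorm_comp_le _ _
    _ ≤ 1 * ‖B‖ := by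
        gcongr
        exacts [(norm_postcomp_le _).trans hI, norm_holderL_le B]
    _ = ‖B‖ := one_mul _

section Pairing

variable {X : Type*} [MeasurableSpace X] {μ : Measure X} {p q : ℝ≥0∞}
  [Fact (1 ≤ p)] [Fact (1 ≤ q)] [HolderConjugate q p] {h : X → ℂ}

noncomputable def integralConjMulCLM (hh : MemLp h q μ) : Lp ℂ p μ →L[ℂ] ℂ :=
  (ContinuousLinearMap.mul ℂ ℂ).lpPairing μ q p (hh.star.toLp (star h))

theorem integralConjMulCLM_apply (hh : MemLp h q μ) (f : Lp ℂ p μ) :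
    integralConjMulCLM hh f = ∫ x, starRingEnd ℂ (h x) * f x ∂μ := by
  rw [integralConjMulCLM, ContinuousLinearMap.lpPairing_eq_integral]
  refine integral_congr_ae ?_
  filter_upwards [hh.star.coeFn_toLp] with x hx
  simp [hx]

theorem norm_integralConjMulCLM_le (hh : MemLp h q μ) :
    ‖integralConjMulCLM (p := p) hh‖ ≤ (eLpNorm h q μ).toReal :=
  calc ‖integralConjMulCLM (p := p) hh‖
      ≤ ‖(ContinuousLinearMap.mul ℂ ℂ).lpPairing μ q p‖ * ‖hh.star.toLp (star h)‖ :=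
        ContinuousLinearMap.le_opNorm _ _
    _ ≤ 1 * (eLpNorm h q μ).toReal := by
        rw [Lp.norm_toLp, eLpNorm_star]
        gcongr
        exact (ContinuousLinearMap.norm_lpPairing_le _).trans (ContinuousLinearMap.opNorm_mul_le ℂ ℂ)
    _ = (eLpNorm h q μ).toReal := one_mul _

theorem norm_ofReal_smul_integralConjMulCLM_le {c : ℝ} (hc : 0 ≤ c) (hh : MemLp h q μ) :
    ‖(c : ℂ) • integralConjMulCLM (p := p) hh‖ ≤ c * (eLpNorm h q μ).toReal := by
  rw [norm_smul, Complex.norm_real, Real.norm_of_nonneg hc]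
  exact mul_le_mul_of_nonneg_left (norm_integralConjMulCLM_le hh) hc

theorem summable_norm_rpow_mul_norm_rpow_smul_integralConjMulCLM {p' : ℝ≥0∞} [Fact (1 ≤ p')] {r : ℝ}
    {w : ℕ → ℝ} {e : ℕ → X → ℂ} (hr : 0 ≤ r) (hw : ∀ m, 0 ≤ w m)
    (he : ∀ m, MemLp (e m) q μ) (he' : ∀ m, MemLp (e m) p' μ)
    (hsum : Summable fun m =>
      (w m * (eLpNorm (e m) p' μ).toReal * (eLpNorm (e m) q μ).toReal) ^ r) :
    Summable fun m =>
      ‖(w m : ℂ) • integralConjMulCLM (p := p) (he m)‖ ^ r * ‖(he' m).toLp (e m)‖ ^ r := by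
  refine hsum.of_nonneg_of_le (fun m => by positivity) fun m => ?_
  rw [← Real.mul_rpow (norm_nonneg _) (norm_nonneg _), Lp.norm_toLp]
  refine Real.rpow_le_rpow (by positivity) ?_ hr
  calc ‖(w m : ℂ) • integralConjMulCLM (p := p) (he m)‖ * (eLpNorm (e m) p' μ).toReal
      ≤ w m * (eLpNorm (e m) q μ).toReal * (eLpNorm (e m) p' μ).toReal := by
        gcongr
        exact norm_ofReal_smul_integralConjMulCLM_le (hw m) _
    _ = w m * (eLpNorm (e m) p' μ).toReal * (eLpNorm (e m) q μ).toReal := by ring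

end Pairing

theorem rNuclear_of_order_gt_general
    {X : Type*} [MeasurableSpace X] (μ : Measure X)
    (r : ℝ) (hr0 : 0 < r) (hr1 : r ≤ 1)
    (n : ℝ)
    (p₁ p₁' p₂ : ℝ≥0∞) [Fact (1 ≤ p₁)] [Fact (1 ≤ p₂)]
    (hconj : 1 / p₁ + 1 / p₁' = 1)
    (lam : ℕ → ℝ) (hlam : ∀ m, 1 ≤ lam m)
    (hlamsum : ∀ κ : ℝ, n < κ → Summable (fun m : ℕ => lam m ^ (-κ)))
    (a b C₀ : ℝ) (hC₀ : 0 ≤ C₀)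
    (e : ℕ → X → ℂ)
    (he₂ : ∀ m, MemLp (e m) p₂ μ) (he₁' : ∀ m, MemLp (e m) p₁' μ)
    (hnorm₂ : ∀ m, eLpNorm (e m) p₂ μ ≤ ENNReal.ofReal (C₀ * lam m ^ a))
    (hnorm₁' : ∀ m, eLpNorm (e m) p₁' μ ≤ ENNReal.ofReal (C₀ * lam m ^ b)) :
    ∀ s : ℝ, n / r + a + b < s →
      Summable (fun m : ℕ =>
          lam m ^ (-(s * r)) * (eLpNorm (e m) p₂ μ).toReal ^ r *
            (eLpNorm (e m) p₁' μ).toReal ^ r) ∧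
      ∃ E : Lp ℂ p₁ μ →L[ℂ] Lp ℂ p₂ μ,
        (∀ f : Lp ℂ p₁ μ,
          Summable (fun m : ℕ =>
            ‖(((lam m ^ (-s) : ℝ) : ℂ) * ∫ x, (starRingEnd ℂ) (e m x) * f x ∂μ) •
              ((he₂ m).toLp (e m))‖) ∧
          HasSum (fun m : ℕ =>
            (((lam m ^ (-s) : ℝ) : ℂ) * ∫ x, (starRingEnd ℂ) (e m x) * f x ∂μ) •
              ((he₂ m).toLp (e m))) (E f)) ∧
        IsRNuclear r E := by
  intro s hs
  have hlam0 m : 0 < lam m := one_pos.trans_le (hlam m)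
  have hκ : n < (s - a - b) * r := by rw [← div_lt_iff₀ hr0]; linarith
  have hN {p : ℝ≥0∞} {c : ℝ} {m : ℕ} (h : eLpNorm (e m) p μ ≤ ENNReal.ofReal (C₀ * lam m ^ c)) :
      (eLpNorm (e m) p μ).toReal ≤ C₀ * lam m ^ c :=
    ENNReal.toReal_le_of_le_ofReal (by have := hlam0 m; positivity) h
  have hweights : Summable fun m =>
      (lam m ^ (-s) * (eLpNorm (e m) p₂ μ).toReal * (eLpNorm (e m) p₁' μ).toReal) ^ r :=
    summable_rpow_mul_of_le_mul_rpow hlam0 hr0.le (fun _ => toReal_nonneg) (fun _ => toReal_nonneg)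
      (fun m => hN (hnorm₂ m)) (fun m => hN (hnorm₁' m)) (hlamsum _ hκ)
  have : HolderConjugate p₁' p₁ := by
    rw [holderConjugate_iff]; simpa [one_div, add_comm] using hconj
  have : Fact (1 ≤ p₁') := ⟨HolderConjugate.one_le p₁' p₁⟩
  set φ : ℕ → Lp ℂ p₁ μ →L[ℂ] ℂ := fun m =>
    ((lam m ^ (-s) : ℝ) : ℂ) • integralConjMulCLM (he₁' m)
  set g : ℕ → Lp ℂ p₂ μ := fun m => (he₂ m).toLp (e m)
  have hφg : Summable fun m => ‖φ m‖ ^ r * ‖g m‖ ^ r :=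
    summable_norm_rpow_mul_norm_rpow_smul_integralConjMulCLM hr0.le
      (fun m => Real.rpow_nonneg (hlam0 m).le _) he₁' he₂ hweights
  have hterm (f : Lp ℂ p₁ μ) (m : ℕ) : φ m f • g m =
      (((lam m ^ (-s) : ℝ) : ℂ) * ∫ x, (starRingEnd ℂ) (e m x) * f x ∂μ) • (he₂ m).toLp (e m) := by
    simp [φ, g, integralConjMulCLM_apply]
  have hT := summable_norm_smulRight_of_summable_rpow hr0 hr1 hφg
  refine ⟨?_, ∑' m, (φ m).smulRight (g m), fun f => ⟨?_, ?_⟩, isRNuclear_tsum_smulRight hr0 hr1 hφg⟩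
  · refine hweights.congr fun m => ?_
    have := hlam0 m
    rw [Real.mul_rpow (by positivity) toReal_nonneg, Real.mul_rpow (by positivity) toReal_nonneg,
      ← Real.rpow_mul this.le, neg_mul]
  · simpa only [hterm f] using summable_norm_smulRight_apply hT f
  · simpa only [hterm f] using hasSum_smulRight_apply hT f

/-- Abstract form of the `r`-nuclearity of Bessel potentials: given exponents
`1 ≤ p₁ < ∞` (with conjugate `p₁'`) and `1 ≤ p₂ ≤ ∞`, reals `λ_m ≥ 1` whose
negative powers `λ_m^{-κ}` are summable for every `κ > n`, and functions
`e_m ∈ L^{p₂} ∩ L^{p₁'}` with `‖e_m‖_{p₂} ≤ C₀ λ_m^a`, `‖e_m‖_{p₁'} ≤ C₀ λ_m^b`,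
then for any `s > n/r + a + b` the weighted norm series is `r`-summable and the
operator `f ↦ ∑ m, λ_m^{-s} (∫ conj(e_m) f dμ) e_m : L^{p₁} → L^{p₂}` is
well defined (the series converging absolutely in `L^{p₂}`) and `r`-nuclear. -/
theorem rNuclear_of_order_gt
    {X : Type*} [MeasurableSpace X] (μ : Measure X) [SigmaFinite μ]
    (r : ℝ) (hr0 : 0 < r) (hr1 : r ≤ 1)
    (n : ℝ) (hn : 0 < n)
    (p₁ p₁' p₂ : ℝ≥0∞) [Fact (1 ≤ p₁)] [Fact (1 ≤ p₂)]
    (hp₁top : p₁ < ∞) (hconj : 1 / p₁ + 1 / p₁' = 1)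
    (lam : ℕ → ℝ) (hlam : ∀ m, 1 ≤ lam m)
    (hlamsum : ∀ κ : ℝ, n < κ → Summable (fun m : ℕ => lam m ^ (-κ)))
    (a b C₀ : ℝ) (ha : 0 ≤ a) (hb : 0 ≤ b) (hC₀ : 0 ≤ C₀)
    (e : ℕ → X → ℂ) (hmeas : ∀ m, Measurable (e m))
    (he₂ : ∀ m, MemLp (e m) p₂ μ) (he₁' : ∀ m, MemLp (e m) p₁' μ)
    (hnorm₂ : ∀ m, eLpNorm (e m) p₂ μ ≤ ENNReal.ofReal (C₀ * lam m ^ a))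
    (hnorm₁' : ∀ m, eLpNorm (e m) p₁' μ ≤ ENNReal.ofReal (C₀ * lam m ^ b)) :
    ∀ s : ℝ, n / r + a + b < s →
      Summable (fun m : ℕ =>
          lam m ^ (-(s * r)) * (eLpNorm (e m) p₂ μ).toReal ^ r *
            (eLpNorm (e m) p₁' μ).toReal ^ r) ∧
      ∃ E : Lp ℂ p₁ μ →L[ℂ] Lp ℂ p₂ μ,
        (∀ f : Lp ℂ p₁ μ,
          Summable (fun m : ℕ =>
            ‖(((lam m ^ (-s) : ℝ) : ℂ) * ∫ x, (starRingEnd ℂ) (e m x) * f x ∂μ) •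
              ((he₂ m).toLp (e m))‖) ∧
          HasSum (fun m : ℕ =>
            (((lam m ^ (-s) : ℝ) : ℂ) * ∫ x, (starRingEnd ℂ) (e m x) * f x ∂μ) •
              ((he₂ m).toLp (e m))) (E f)) ∧
        IsRNuclear r E :=
  rNuclear_of_order_gt_general μ r hr0 hr1 n p₁ p₁' p₂ hconj lam hlam hlamsum a b C₀ hC₀ e he₂ he₁'
    hnorm₂ hnorm₁'
end
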